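/- arXiv:2311.17573 — 2 statements merged into one kernel-verified Lean document; each statement's English description precedes it below -/
import Mathlib

section
/- Let n ≥ r ≥ 3 and t ≥ 3, and let H be a linear r-uniform hypergraph on n vertices. Let u, w be adjacent vertices of H, let l_{uw} denote the unique edge containing both u and w, let v ∈ N_u \ {w}, and let l_{vu} (resp. l_{vw}) denote the unique edge containing v and u (resp. v and w, taken to be ∅ if v and w are not adjacent). Suppose W is a set of vertices with W ⊆ (N_v ∩ N_u ∩ N_w) \ (l_{vu} ∪ l_{vw} ∪ l_{uw}) such that for any two distinct vertices u₁, u₂ ∈ W, the unique edge containing v and u₁ differs from the unique edge containing v and u₂. If |W| ≥ (t−1)(r−1)+1, then H contains a Berge-K_{3,t}. -/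
def isUniform {V : Type*} (E : Finset (Finset V)) (r : ℕ) : Prop := ∀ e ∈ E, e.card = r

def isLinear {V : Type*} [DecidableEq V] (E : Finset (Finset V)) : Prop :=
  ∀ e ∈ E, ∀ f ∈ E, e ≠ f → (e ∩ f).card ≤ 1

def hAdj {V : Type*} (E : Finset (Finset V)) (u v : V) : Prop :=
  u ≠ v ∧ ∃ e ∈ E, u ∈ e ∧ v ∈ e

def nbhd {V : Type*} [Fintype V] [DecidableEq V] (E : Finset (Finset V)) (u : V) : Finset V :=
  Finset.univ.filter (fun v => v ≠ u ∧ ∃ e ∈ E, u ∈ e ∧ v ∈ e)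

/-- `H` (with edge set `E`) contains a Berge-`K_{3,t}`: there are disjoint vertex sets `A` of
size 3 and `B` of size `t`, and pairwise distinct hyperedges `f a b ∈ E` for `a ∈ A`, `b ∈ B`
with `a, b ∈ f a b` (so that `f` is a bijection from the edges of the skeleton `K_{3,t}`
onto a subhypergraph of `H`). -/
def containsBergeK3t {V : Type*} (E : Finset (Finset V)) (t : ℕ) : Prop :=
  ∃ (A B : Finset V) (f : V → V → Finset V),
    A.card = 3 ∧ B.card = t ∧ Disjoint A B ∧
    (∀ a ∈ A, ∀ b ∈ B, f a b ∈ E ∧ a ∈ f a b ∧ b ∈ f a b) ∧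
    (∀ a ∈ A, ∀ b ∈ B, ∀ a' ∈ A, ∀ b' ∈ B, f a b = f a' b' → a = a' ∧ b = b')


open Finset

/-- From a set `S` with two "coloring" maps `f, g` whose fibers on `S` have size at most `k`,
if `|S| ≥ (t-1)k + 1` then one can find `B ⊆ S` of size `t` on which both `f` and `g` are
injective. (A matching of size `m/Δ` in a bipartite multigraph.) -/
lemma exists_doubly_inj {α β : Type*} [DecidableEq α] [DecidableEq β]
    (S : Finset α) (f g : α → β) (k t : ℕ)
    (hf : ∀ b : β, (S.filter (fun x => f x = b)).card ≤ k)
    (hg : ∀ b : β, (S.filter (fun x => g x = b)).card ≤ k)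
    (hcard : (t - 1) * k + 1 ≤ S.card) :
    ∃ B ⊆ S, B.card = t ∧
      (∀ x ∈ B, ∀ y ∈ B, f x = f y → x = y) ∧
      (∀ x ∈ B, ∀ y ∈ B, g x = g y → x = y) := by
  classical
  have hS1 : 1 ≤ S.card := le_trans (by omega) hcard
  obtain ⟨x0, hx0⟩ := Finset.card_pos.mp hS1
  have hk : 1 ≤ k := by
    by_contra h
    have hk0 : k = 0 := by omega
    have h1 := hf (f x0)
    have h2 : x0 ∈ S.filter (fun y => f y = f x0) := by simp [hx0]
    have := Finset.card_pos.mpr ⟨x0, h2⟩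
    omega
  set P := S.image f with hP
  set p := P.card with hp
  -- S is covered by the fibers over P
  have hcover : S.card ≤ p * k := by
    have hsub : S ⊆ P.biUnion (fun b => S.filter (fun x => f x = b)) := by
      intro x hx
      exact Finset.mem_biUnion.mpr ⟨f x, Finset.mem_image_of_mem f hx, by simp [hx]⟩
    calc S.card ≤ (P.biUnion (fun b => S.filter (fun x => f x = b))).card :=
          Finset.card_le_card hsub
      _ ≤ ∑ b ∈ P, (S.filter (fun x => f x = b)).card := Finset.card_biUnion_le
      _ ≤ ∑ _b ∈ P, k := Finset.sum_le_sum (fun b _ => hf b)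
      _ = p * k := by simp [hp, mul_comm]
  have hpt : t ≤ p := by
    rcases Nat.eq_zero_or_pos t with rfl | htpos
    · omega
    · by_contra h
      push_neg at h
      have : p ≤ t - 1 := by omega
      have := Nat.mul_le_mul_right k this
      omega
  -- Hall's theorem setup
  set T : {b : β // b ∈ P} → Finset (β ⊕ ℕ) := fun b =>
    ((S.filter (fun x => f x = ↑b)).image (fun x => Sum.inl (g x))) ∪
      ((Finset.range (p - t)).image Sum.inr) with hT
  have hall : ∀ s : Finset {b : β // b ∈ P}, s.card ≤ (s.biUnion T).card := by
    intro s
    rcases s.eq_empty_or_nonempty with rfl | hs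
    · simp
    set A : Finset β := s.image Subtype.val with hA
    have hAcard : A.card = s.card := Finset.card_image_of_injective _ Subtype.val_injective
    have hAP : A ⊆ P := by
      intro b hb
      obtain ⟨b', _, rfl⟩ := Finset.mem_image.mp hb
      exact b'.property
    set NG : Finset β := s.biUnion (fun b => (S.filter (fun x => f x = ↑b)).image g) with hNG
    -- lower bound on the size of the union
    have hsubT : NG.image Sum.inl ∪ (Finset.range (p - t)).image Sum.inr ⊆ s.biUnion T := by
      intro z hz
      rcases Finset.mem_union.mp hz with hz | hz
      · obtain ⟨c, hc, rfl⟩ := Finset.mem_image.mp hz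
        obtain ⟨b, hb, hc'⟩ := Finset.mem_biUnion.mp hc
        obtain ⟨x, hx, rfl⟩ := Finset.mem_image.mp hc'
        exact Finset.mem_biUnion.mpr ⟨b, hb, Finset.mem_union_left _
          (Finset.mem_image.mpr ⟨x, hx, rfl⟩)⟩
      · obtain ⟨b, hb⟩ := hs
        exact Finset.mem_biUnion.mpr ⟨b, hb, Finset.mem_union_right _ hz⟩
    have hdisj : Disjoint (NG.image Sum.inl) ((Finset.range (p - t)).image Sum.inr) := by
      rw [Finset.disjoint_left]
      rintro z hz1 hz2
      obtain ⟨c, _, rfl⟩ := Finset.mem_image.mp hz1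
      obtain ⟨j, _, hj⟩ := Finset.mem_image.mp hz2
      exact absurd hj (by simp)
    have hbig : NG.card + (p - t) ≤ (s.biUnion T).card := by
      have := Finset.card_le_card hsubT
      rwa [Finset.card_union_of_disjoint hdisj,
        Finset.card_image_of_injective _ Sum.inl_injective,
        Finset.card_image_of_injective _ Sum.inr_injective, Finset.card_range] at this
    -- counting
    set mA := (S.filter (fun x => f x ∈ A)).card with hmA
    have h1 : S.card ≤ mA + (p - A.card) * k := by
      have hsplit : S.card = mA + (S.filter (fun x => ¬ f x ∈ A)).card := by
        rw [hmA, Finset.card_filter_add_card_filter_not]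
      have hsub2 : S.filter (fun x => ¬ f x ∈ A) ⊆
          (P \ A).biUnion (fun b => S.filter (fun x => f x = b)) := by
        intro x hx
        rw [Finset.mem_filter] at hx
        exact Finset.mem_biUnion.mpr ⟨f x, Finset.mem_sdiff.mpr
          ⟨Finset.mem_image_of_mem f hx.1, hx.2⟩, by simp [hx.1]⟩
      have h2 : (S.filter (fun x => ¬ f x ∈ A)).card ≤ (p - A.card) * k := by
        calc (S.filter (fun x => ¬ f x ∈ A)).card
            ≤ ((P \ A).biUnion (fun b => S.filter (fun x => f x = b))).card :=
              Finset.card_le_card hsub2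
          _ ≤ ∑ b ∈ P \ A, (S.filter (fun x => f x = b)).card := Finset.card_biUnion_le
          _ ≤ ∑ _b ∈ P \ A, k := Finset.sum_le_sum (fun b _ => hf b)
          _ = (p - A.card) * k := by rw [Finset.sum_const, smul_eq_mul, Finset.card_sdiff_of_subset hAP]
      omega
    have h3 : mA ≤ NG.card * k := by
      have hsub3 : S.filter (fun x => f x ∈ A) ⊆
          NG.biUnion (fun c => S.filter (fun x => g x = c)) := by
        intro x hx
        rw [Finset.mem_filter] at hx
        obtain ⟨b, hb, hbv⟩ := Finset.mem_image.mp hx.2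
        refine Finset.mem_biUnion.mpr ⟨g x, ?_, by simp [hx.1]⟩
        exact Finset.mem_biUnion.mpr ⟨b, hb, Finset.mem_image.mpr
          ⟨x, Finset.mem_filter.mpr ⟨hx.1, hbv.symm⟩, rfl⟩⟩
      calc mA ≤ (NG.biUnion (fun c => S.filter (fun x => g x = c))).card :=
            Finset.card_le_card hsub3
        _ ≤ ∑ c ∈ NG, (S.filter (fun x => g x = c)).card := Finset.card_biUnion_le
        _ ≤ ∑ _c ∈ NG, k := Finset.sum_le_sum (fun c _ => hg c)
        _ = NG.card * k := by simp [mul_comm]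
    -- arithmetic
    have hApcard : A.card ≤ p := Finset.card_le_card hAP
    have key : t ≤ NG.card + (p - A.card) := by
      by_contra h
      push_neg at h
      have : NG.card + (p - A.card) ≤ t - 1 := by omega
      have := Nat.mul_le_mul_right k this
      have : NG.card * k + (p - A.card) * k ≤ (t - 1) * k := by
        rw [← Nat.add_mul]; exact this
      omega
    omega
  obtain ⟨F, Finj, hF⟩ := (Finset.all_card_le_biUnion_card_iff_exists_injective T).mp hall
  -- at least t indices get a "left" value
  haveI : Fintype {b : β // b ∈ P} := FinsetCoe.fintype P
  set P' := (Finset.univ : Finset {b : β // b ∈ P}).filter (fun b => (F b).isLeft) with hP'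
  have hleft : ∀ b : {b : β // b ∈ P}, (F b).isLeft →
      ∃ x ∈ S, f x = ↑b ∧ Sum.inl (g x) = F b := by
    intro b hb
    have := hF b
    rw [hT] at this
    rcases Finset.mem_union.mp this with h | h
    · obtain ⟨x, hx, hxe⟩ := Finset.mem_image.mp h
      rw [Finset.mem_filter] at hx
      exact ⟨x, hx.1, hx.2, hxe⟩
    · obtain ⟨j, _, hj⟩ := Finset.mem_image.mp h
      rw [← hj] at hb
      simp at hb
  have hP'card : t ≤ P'.card := by
    have htot : P'.card + ((Finset.univ : Finset {b : β // b ∈ P}).filter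
        (fun b => ¬ (F b).isLeft)).card = p := by
      rw [hP', Finset.card_filter_add_card_filter_not, Finset.card_univ,
        Fintype.card_coe]
    set P'' := (Finset.univ : Finset {b : β // b ∈ P}).filter (fun b => ¬ (F b).isLeft)
      with hP''
    have hP''sub : P''.image F ⊆ (Finset.range (p - t)).image Sum.inr := by
      intro z hz
      obtain ⟨b, hb, rfl⟩ := Finset.mem_image.mp hz
      rw [hP'', Finset.mem_filter] at hb
      have := hF b
      rw [hT] at this
      rcases Finset.mem_union.mp this with h | h
      · obtain ⟨x, _, hxe⟩ := Finset.mem_image.mp h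
        rw [← hxe] at hb
        simp at hb
      · exact h
    have hP''card : P''.card ≤ p - t := by
      calc P''.card = (P''.image F).card :=
            (Finset.card_image_of_injective _ Finj).symm
        _ ≤ ((Finset.range (p - t)).image Sum.inr).card := Finset.card_le_card hP''sub
        _ ≤ p - t := by
            rw [Finset.card_image_of_injective _ Sum.inr_injective, Finset.card_range]
    omega
  obtain ⟨B0, hB0sub, hB0card⟩ := Finset.exists_subset_card_eq hP'card
  -- choose a representative for each chosen block
  set ξ : {b : β // b ∈ P} → α := fun b =>
    if h : ∃ x, x ∈ S ∧ f x = ↑b ∧ Sum.inl (g x) = F b then h.choose else x0 with hξ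
  have hξspec : ∀ b ∈ B0, ξ b ∈ S ∧ f (ξ b) = ↑b ∧ Sum.inl (g (ξ b)) = F b := by
    intro b hb
    have hbP' := hB0sub hb
    rw [hP', Finset.mem_filter] at hbP'
    obtain ⟨x, hx1, hx2, hx3⟩ := hleft b hbP'.2
    have hex : ∃ x, x ∈ S ∧ f x = ↑b ∧ Sum.inl (g x) = F b := ⟨x, hx1, hx2, hx3⟩
    rw [hξ]
    simp only [dif_pos hex]
    exact hex.choose_spec
  refine ⟨B0.image ξ, ?_, ?_, ?_, ?_⟩
  · intro x hx
    obtain ⟨b, hb, rfl⟩ := Finset.mem_image.mp hx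
    exact (hξspec b hb).1
  · rw [Finset.card_image_of_injOn, hB0card]
    intro b hb b' hb' he
    have h1 := (hξspec b hb).2.1
    have h2 := (hξspec b' hb').2.1
    rw [he] at h1
    exact Subtype.ext (h1 ▸ h2 ▸ rfl)
  · intro x hx y hy hxy
    obtain ⟨b, hb, rfl⟩ := Finset.mem_image.mp hx
    obtain ⟨b', hb', rfl⟩ := Finset.mem_image.mp hy
    have h1 := (hξspec b hb).2.1
    have h2 := (hξspec b' hb').2.1
    have : b = b' := Subtype.ext (by rw [← h1, ← h2, hxy])
    rw [this]
  · intro x hx y hy hxy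
    obtain ⟨b, hb, rfl⟩ := Finset.mem_image.mp hx
    obtain ⟨b', hb', rfl⟩ := Finset.mem_image.mp hy
    have h1 := (hξspec b hb).2.2
    have h2 := (hξspec b' hb').2.2
    have : F b = F b' := by rw [← h1, ← h2, hxy]
    rw [Finj this]


theorem stmt_15 (n r t : ℕ) (hn : r ≤ n) (hr : 3 ≤ r) (ht : 3 ≤ t)
    (E : Finset (Finset (Fin n))) (hunif : isUniform E r) (hlin : isLinear E)
    (u w v : Fin n) (huw : hAdj E u w)
    (luw : Finset (Fin n)) (hluw : luw ∈ E ∧ u ∈ luw ∧ w ∈ luw)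
    (hv : v ∈ nbhd E u) (hvw : v ≠ w)
    (lvu : Finset (Fin n)) (hlvu : lvu ∈ E ∧ v ∈ lvu ∧ u ∈ lvu)
    (lvw : Finset (Fin n))
    (hlvw : (hAdj E v w → lvw ∈ E ∧ v ∈ lvw ∧ w ∈ lvw) ∧ (¬ hAdj E v w → lvw = ∅))
    (W : Finset (Fin n))
    (hW : W ⊆ ((nbhd E v ∩ nbhd E u ∩ nbhd E w) \ (lvu ∪ lvw ∪ luw)))
    (hWedges : ∀ u₁ ∈ W, ∀ u₂ ∈ W, u₁ ≠ u₂ →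
      ∀ e ∈ E, v ∈ e → ¬(u₁ ∈ e ∧ u₂ ∈ e))
    (hWcard : (t - 1) * (r - 1) + 1 ≤ W.card) :
    containsBergeK3t E t := by
  classical
  -- two distinct vertices lie in at most one common edge
  have edge_eq : ∀ e ∈ E, ∀ e' ∈ E, ∀ x y : Fin n, x ≠ y →
      x ∈ e → y ∈ e → x ∈ e' → y ∈ e' → e = e' := by
    intro e he e' he' x y hxy hxe hye hxe' hye'
    by_contra hne
    have hle := hlin e he e' he' hne
    have h2 : ({x, y} : Finset (Fin n)) ⊆ e ∩ e' := by
      intro z hz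
      rcases Finset.mem_insert.mp hz with rfl | hz
      · exact Finset.mem_inter.mpr ⟨hxe, hxe'⟩
      · rw [Finset.mem_singleton] at hz; subst hz
        exact Finset.mem_inter.mpr ⟨hye, hye'⟩
    have := Finset.card_le_card h2
    rw [Finset.card_insert_of_notMem (by simp [hxy]), Finset.card_singleton] at this
    omega
  -- unpack W membership
  have hWmem : ∀ x ∈ W, (x ∈ nbhd E v ∧ x ∈ nbhd E u ∧ x ∈ nbhd E w) ∧
      x ∉ lvu ∧ x ∉ lvw ∧ x ∉ luw := by
    intro x hx
    have := hW hx
    rw [Finset.mem_sdiff, Finset.mem_inter, Finset.mem_inter] at this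
    simp only [Finset.mem_union, not_or] at this
    exact ⟨⟨this.1.1.1, this.1.1.2, this.1.2⟩, this.2.1.1, this.2.1.2, this.2.2⟩
  have hnbhd : ∀ a x : Fin n, x ∈ nbhd E a → x ≠ a ∧ ∃ e, e ∈ E ∧ a ∈ e ∧ x ∈ e := by
    intro a x hx
    rw [nbhd, Finset.mem_filter] at hx
    obtain ⟨-, hxa, e, he, hae, hxe⟩ := hx
    exact ⟨hxa, e, he, hae, hxe⟩
  -- the edge chooser
  set eAt : Fin n → Fin n → Finset (Fin n) := fun a x =>
    if h : ∃ e, e ∈ E ∧ a ∈ e ∧ x ∈ e then h.choose else ∅ with heAt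
  have heAtSpec : ∀ a x : Fin n, (∃ e, e ∈ E ∧ a ∈ e ∧ x ∈ e) →
      eAt a x ∈ E ∧ a ∈ eAt a x ∧ x ∈ eAt a x := by
    intro a x h
    rw [heAt]
    simp only [dif_pos h]
    exact h.choose_spec
  have hvu : v ≠ u := (hnbhd u v hv).1
  have huw' : u ≠ w := huw.1
  -- specs for vertices of W
  have hexV : ∀ x ∈ W, eAt v x ∈ E ∧ v ∈ eAt v x ∧ x ∈ eAt v x := fun x hx =>
    heAtSpec v x ((hnbhd v x (hWmem x hx).1.1).2)
  have hexU : ∀ x ∈ W, eAt u x ∈ E ∧ u ∈ eAt u x ∧ x ∈ eAt u x := fun x hx =>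
    heAtSpec u x ((hnbhd u x (hWmem x hx).1.2.1).2)
  have hexW : ∀ x ∈ W, eAt w x ∈ E ∧ w ∈ eAt w x ∧ x ∈ eAt w x := fun x hx =>
    heAtSpec w x ((hnbhd w x (hWmem x hx).1.2.2).2)
  -- fiber bounds
  have fiber_bound : ∀ a : Fin n,
      (∀ x ∈ W, eAt a x ∈ E ∧ a ∈ eAt a x ∧ x ∈ eAt a x) →
      (∀ x ∈ W, x ≠ a) →
      ∀ b : Finset (Fin n), (W.filter (fun x => eAt a x = b)).card ≤ r - 1 := by
    intro a hspec hne b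
    rcases (W.filter (fun x => eAt a x = b)).eq_empty_or_nonempty with he | ⟨x1, hx1⟩
    · rw [he]; simp
    rw [Finset.mem_filter] at hx1
    have hbE : b ∈ E := hx1.2 ▸ (hspec x1 hx1.1).1
    have hab : a ∈ b := hx1.2 ▸ (hspec x1 hx1.1).2.1
    have hsub : W.filter (fun x => eAt a x = b) ⊆ b.erase a := by
      intro x hx
      rw [Finset.mem_filter] at hx
      exact Finset.mem_erase.mpr ⟨hne x hx.1, hx.2 ▸ (hspec x hx.1).2.2⟩
    calc (W.filter (fun x => eAt a x = b)).card ≤ (b.erase a).card :=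
          Finset.card_le_card hsub
      _ = r - 1 := by rw [Finset.card_erase_of_mem hab, hunif b hbE]
  have hWneU : ∀ x ∈ W, x ≠ u := fun x hx => (hnbhd u x (hWmem x hx).1.2.1).1
  have hWneW : ∀ x ∈ W, x ≠ w := fun x hx => (hnbhd w x (hWmem x hx).1.2.2).1
  have hWneV : ∀ x ∈ W, x ≠ v := fun x hx => (hnbhd v x (hWmem x hx).1.1).1
  -- select B
  obtain ⟨B, hBW, hBcard, hBinjU, hBinjW⟩ := exists_doubly_inj W (eAt u) (eAt w)
    (r - 1) t (fiber_bound u hexU hWneU) (fiber_bound w hexW hWneW) hWcard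
  -- injectivity of eAt v on W
  have hBinjV : ∀ x ∈ B, ∀ y ∈ B, eAt v x = eAt v y → x = y := by
    intro x hx y hy hxy
    by_contra hne
    exact hWedges x (hBW hx) y (hBW hy) hne (eAt v x) (hexV x (hBW hx)).1
      (hexV x (hBW hx)).2.1 ⟨(hexV x (hBW hx)).2.2, hxy ▸ (hexV y (hBW hy)).2.2⟩
  -- cross-apex impossibility
  have crossVU : ∀ x ∈ W, ∀ y ∈ W, eAt v x ≠ eAt u y := by
    intro x hx y hy h
    have h1 := hexV x hx
    have h2 := hexU y hy
    rw [h] at h1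
    have : eAt u y = lvu := edge_eq _ h2.1 _ hlvu.1 v u hvu h1.2.1 h2.2.1 hlvu.2.1 hlvu.2.2
    exact (hWmem x hx).2.1 (this ▸ h1.2.2)
  have crossUW : ∀ x ∈ W, ∀ y ∈ W, eAt u x ≠ eAt w y := by
    intro x hx y hy h
    have h1 := hexU x hx
    have h2 := hexW y hy
    rw [h] at h1
    have : eAt w y = luw := edge_eq _ h2.1 _ hluw.1 u w huw' h1.2.1 h2.2.1 hluw.2.1 hluw.2.2
    exact (hWmem x hx).2.2.2 (this ▸ h1.2.2)
  have crossVW : ∀ x ∈ W, ∀ y ∈ W, eAt v x ≠ eAt w y := by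
    intro x hx y hy h
    have h1 := hexV x hx
    have h2 := hexW y hy
    rw [h] at h1
    have hadj : hAdj E v w := ⟨hvw, eAt w y, h2.1, h1.2.1, h2.2.1⟩
    obtain ⟨hlvwE, hvlvw, hwlvw⟩ := hlvw.1 hadj
    have : eAt w y = lvw := edge_eq _ h2.1 _ hlvwE v w hvw h1.2.1 h2.2.1 hvlvw hwlvw
    exact (hWmem x hx).2.2.1 (this ▸ h1.2.2)
  -- assemble the Berge K_{3,t}
  refine ⟨{v, u, w}, B, eAt, ?_, hBcard, ?_, ?_, ?_⟩
  · rw [Finset.card_insert_of_notMem (by simp [hvu, hvw]),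
      Finset.card_insert_of_notMem (by simp [huw']), Finset.card_singleton]
  · rw [Finset.disjoint_left]
    intro a ha haB
    have haW := hBW haB
    rcases Finset.mem_insert.mp ha with rfl | ha
    · exact hWneV a haW rfl
    rcases Finset.mem_insert.mp ha with rfl | ha
    · exact hWneU a haW rfl
    · rw [Finset.mem_singleton] at ha; exact hWneW a haW ha
  · intro a ha b hb
    rcases Finset.mem_insert.mp ha with rfl | ha
    · exact hexV b (hBW hb)
    rcases Finset.mem_insert.mp ha with rfl | ha
    · exact hexU b (hBW hb)
    · rw [Finset.mem_singleton] at ha; subst ha; exact hexW b (hBW hb)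
  · intro a ha b hb a' ha' b' hb' heq
    have hbW := hBW hb
    have hb'W := hBW hb'
    simp only [Finset.mem_insert, Finset.mem_singleton] at ha ha'
    rcases ha with rfl | rfl | rfl <;> rcases ha' with h' | h' | h' <;>
      (try subst h') <;>
      first
        | exact ⟨rfl, hBinjV b hb b' hb' heq⟩
        | exact ⟨rfl, hBinjU b hb b' hb' heq⟩
        | exact ⟨rfl, hBinjW b hb b' hb' heq⟩
        | exact absurd heq (crossVU b hbW b' hb'W)
        | exact absurd heq (crossUW b hbW b' hb'W)
        | exact absurd heq (crossVW b hbW b' hb'W)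
        | exact absurd heq.symm (crossVU b' hb'W b hbW)
        | exact absurd heq.symm (crossUW b' hb'W b hbW)
        | exact absurd heq.symm (crossVW b' hb'W b hbW)
end

section
/- Let r ≥ 3, n ≥ r with (r−1)² dividing n−r, and let F be the r-graph obtained as follows: take an edge l = {u, w, v₁, …, v_{r−2}}, take (n−r)/(r−1)² vertex-disjoint copies of the lattice [r−1]² (each a 2-regular linear (r−1)-graph on (r−1)² vertices whose edges split into a red perfect matching and a blue perfect matching of size r−1 each), and insert u into every red edge and w into every blue edge (making them r-sets). Then F is a linear r-uniform hypergraph on n vertices with exactly 2(n−r)/(r−1) + 1 edges, and d_u(F) = d_w(F) = (n−1)/(r−1). -/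
def hdegree {V : Type*} [DecidableEq V] (E : Finset (Finset V)) (v : V) : ℕ :=
  (E.filter (fun e => v ∈ e)).card

/-- The vertex set of the construction `F`: the `r` vertices of the edge `l`, together with
`k` disjoint copies of the `(r-1) × (r-1)` lattice `[r-1]²`. -/
abbrev consV (r k : ℕ) := Fin r ⊕ (Fin k × Fin (r - 1) × Fin (r - 1))

/-- The edge `l = {u, w, v₁, …, v_{r-2}}`. -/
def baseEdge (r k : ℕ) : Finset (consV r k) := Finset.univ.image Sum.inl

/-- The red edges: each row of each copy of `[r-1]²`, with the vertex `u` inserted. -/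
def redEdges (r k : ℕ) (u : consV r k) : Finset (Finset (consV r k)) :=
  Finset.univ.image (fun p : Fin k × Fin (r - 1) =>
    insert u (Finset.univ.image (fun j : Fin (r - 1) => Sum.inr (p.1, p.2, j))))

/-- The blue edges: each column of each copy of `[r-1]²`, with the vertex `w` inserted. -/
def blueEdges (r k : ℕ) (w : consV r k) : Finset (Finset (consV r k)) :=
  Finset.univ.image (fun p : Fin k × Fin (r - 1) =>
    insert w (Finset.univ.image (fun j : Fin (r - 1) => Sum.inr (p.1, j, p.2))))

/-- The edge set of the construction `F = l ∨_{u,w} k·[r-1]²`. -/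
def consEdges (r k : ℕ) (u w : consV r k) : Finset (Finset (consV r k)) :=
  {baseEdge r k} ∪ redEdges r k u ∪ blueEdges r k w

/-! ### Auxiliary definitions and lemmas -/

def rowE (r k : ℕ) (u : consV r k) (p : Fin k × Fin (r - 1)) : Finset (consV r k) :=
  insert u (Finset.univ.image (fun j : Fin (r - 1) => Sum.inr (p.1, p.2, j)))

def colE (r k : ℕ) (w : consV r k) (p : Fin k × Fin (r - 1)) : Finset (consV r k) :=
  insert w (Finset.univ.image (fun j : Fin (r - 1) => Sum.inr (p.1, j, p.2)))

lemma redEdges_eq (r k : ℕ) (u : consV r k) :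
    redEdges r k u = Finset.univ.image (rowE r k u) := rfl

lemma blueEdges_eq (r k : ℕ) (w : consV r k) :
    blueEdges r k w = Finset.univ.image (colE r k w) := rfl

lemma mem_rowE {r k : ℕ} {u : consV r k} {p : Fin k × Fin (r - 1)} {x : consV r k} :
    x ∈ rowE r k u p ↔ x = u ∨ ∃ j, Sum.inr (p.1, p.2, j) = x := by
  simp [rowE]

lemma mem_colE {r k : ℕ} {w : consV r k} {p : Fin k × Fin (r - 1)} {x : consV r k} :
    x ∈ colE r k w p ↔ x = w ∨ ∃ j, Sum.inr (p.1, j, p.2) = x := by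
  simp [colE]

lemma mem_baseEdge {r k : ℕ} {x : consV r k} :
    x ∈ baseEdge r k ↔ ∃ i, Sum.inl i = x := by
  simp [baseEdge]

theorem stmt_17 (r n : ℕ) (hr : 3 ≤ r) (hn : r ≤ n) (hdvd : (r - 1) ^ 2 ∣ n - r)
    (k : ℕ) (hk : k = (n - r) / (r - 1) ^ 2)
    (u w : consV r k) (hu : u = Sum.inl ⟨0, by omega⟩) (hw : w = Sum.inl ⟨1, by omega⟩) :
    Fintype.card (consV r k) = n ∧
    isUniform (consEdges r k u w) r ∧
    isLinear (consEdges r k u w) ∧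
    (consEdges r k u w).card = 2 * (n - r) / (r - 1) + 1 ∧
    hdegree (consEdges r k u w) u = (n - 1) / (r - 1) ∧
    hdegree (consEdges r k u w) w = (n - 1) / (r - 1) := by
  have hrpos : 0 < r - 1 := by omega
  have hnr : n - r = k * (r - 1) ^ 2 := by
    rw [hk]; exact (Nat.div_mul_cancel hdvd).symm
  have huw : u ≠ w := by
    rw [hu, hw]; intro h; simp only [Sum.inl.injEq, Fin.mk.injEq] at h; omega
  have hu_nin_inr : ∀ (a : Fin k × Fin (r-1) × Fin (r-1)), u ≠ Sum.inr a := by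
    rw [hu]; intro a h; exact Sum.inl_ne_inr h
  have hw_nin_inr : ∀ (a : Fin k × Fin (r-1) × Fin (r-1)), w ≠ Sum.inr a := by
    rw [hw]; intro a h; exact Sum.inl_ne_inr h
  -- u not in any column edge, w not in any row edge
  have hu_nin_col : ∀ p, u ∉ colE r k w p := by
    intro p hp
    rcases mem_colE.1 hp with h | ⟨j, h⟩
    · exact huw h
    · exact hu_nin_inr _ h.symm
  have hw_nin_row : ∀ p, w ∉ rowE r k u p := by
    intro p hp
    rcases mem_rowE.1 hp with h | ⟨j, h⟩
    · exact huw h.symm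
    · exact hw_nin_inr _ h.symm
  -- cardinalities of the edges
  have hcard_base : (baseEdge r k).card = r := by
    rw [baseEdge, Finset.card_image_of_injective _ Sum.inl_injective,
      Finset.card_univ, Fintype.card_fin]
  have hcard_row : ∀ p, (rowE r k u p).card = r := by
    intro p
    rw [rowE, Finset.card_insert_of_notMem, Finset.card_image_of_injective,
      Finset.card_univ, Fintype.card_fin]
    · omega
    · intro a b hab; simpa using hab
    · simp only [Finset.mem_image, Finset.mem_univ, true_and]
      rintro ⟨j, hj⟩; exact hu_nin_inr _ hj.symm
  have hcard_col : ∀ p, (colE r k w p).card = r := by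
    intro p
    rw [colE, Finset.card_insert_of_notMem, Finset.card_image_of_injective,
      Finset.card_univ, Fintype.card_fin]
    · omega
    · intro a b hab; simpa using hab
    · simp only [Finset.mem_image, Finset.mem_univ, true_and]
      rintro ⟨j, hj⟩; exact hw_nin_inr _ hj.symm
  -- intersection lemmas
  have hbase_row : ∀ p (x : consV r k), x ∈ baseEdge r k → x ∈ rowE r k u p → x = u := by
    intro p x hx hx'
    rcases mem_rowE.1 hx' with h | ⟨j, h⟩
    · exact h
    · rcases mem_baseEdge.1 hx with ⟨i, hi⟩
      exact absurd (h.trans hi.symm) (by simp)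
  have hbase_col : ∀ p (x : consV r k), x ∈ baseEdge r k → x ∈ colE r k w p → x = w := by
    intro p x hx hx'
    rcases mem_colE.1 hx' with h | ⟨j, h⟩
    · exact h
    · rcases mem_baseEdge.1 hx with ⟨i, hi⟩
      exact absurd (h.trans hi.symm) (by simp)
  have hrow_row : ∀ p q (x : consV r k), p ≠ q → x ∈ rowE r k u p → x ∈ rowE r k u q → x = u := by
    intro p q x hpq hx hx'
    rcases mem_rowE.1 hx with h | ⟨j, h⟩
    · exact h
    · rcases mem_rowE.1 hx' with h' | ⟨j', h'⟩
      · exact h'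
      · exfalso
        rw [← h] at h'
        simp only [Sum.inr.injEq, Prod.mk.injEq] at h'
        exact hpq (Prod.ext h'.1.symm h'.2.1.symm)
  have hcol_col : ∀ p q (x : consV r k), p ≠ q → x ∈ colE r k w p → x ∈ colE r k w q → x = w := by
    intro p q x hpq hx hx'
    rcases mem_colE.1 hx with h | ⟨j, h⟩
    · exact h
    · rcases mem_colE.1 hx' with h' | ⟨j', h'⟩
      · exact h'
      · exfalso
        rw [← h] at h'
        simp only [Sum.inr.injEq, Prod.mk.injEq] at h'
        exact hpq (Prod.ext h'.1.symm h'.2.2.symm)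
  have hrow_col : ∀ p q (x : consV r k), x ∈ rowE r k u p → x ∈ colE r k w q →
      x = Sum.inr (p.1, p.2, q.2) := by
    intro p q x hx hx'
    rcases mem_rowE.1 hx with h | ⟨j, h⟩
    · exact absurd (h ▸ hx') (hu_nin_col q)
    · rcases mem_colE.1 hx' with h' | ⟨j', h'⟩
      · exact absurd (h' ▸ hx) (hw_nin_row p)
      · rw [← h] at h' ⊢
        simp only [Sum.inr.injEq, Prod.mk.injEq] at h'
        simp [Sum.inr.injEq, Prod.mk.injEq, h'.2.2]
  -- injectivity of the edge maps
  have hrow_inj : Function.Injective (rowE r k u) := by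
    intro p q h
    have hx : (Sum.inr (p.1, p.2, ⟨0, hrpos⟩) : consV r k) ∈ rowE r k u q := by
      rw [← h, mem_rowE]; exact Or.inr ⟨_, rfl⟩
    rcases mem_rowE.1 hx with h' | ⟨j, h'⟩
    · exact absurd h'.symm (hu_nin_inr _)
    · simp only [Sum.inr.injEq, Prod.mk.injEq] at h'
      exact (Prod.ext h'.1 h'.2.1).symm
  have hcol_inj : Function.Injective (colE r k w) := by
    intro p q h
    have hx : (Sum.inr (p.1, ⟨0, hrpos⟩, p.2) : consV r k) ∈ colE r k w q := by
      rw [← h, mem_colE]; exact Or.inr ⟨_, rfl⟩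
    rcases mem_colE.1 hx with h' | ⟨j, h'⟩
    · exact absurd h'.symm (hw_nin_inr _)
    · simp only [Sum.inr.injEq, Prod.mk.injEq] at h'
      exact (Prod.ext h'.1 h'.2.2).symm
  -- the three families of edges are pairwise distinct
  have hbase_ne_row : ∀ p, baseEdge r k ≠ rowE r k u p := by
    intro p h
    have hx : (Sum.inl ⟨2, by omega⟩ : consV r k) ∈ rowE r k u p := by
      rw [← h, mem_baseEdge]; exact ⟨_, rfl⟩
    rcases mem_rowE.1 hx with h' | ⟨j, h'⟩
    · rw [hu] at h'; simp at h'
    · exact Sum.inl_ne_inr h'.symm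
  have hbase_ne_col : ∀ p, baseEdge r k ≠ colE r k w p := by
    intro p h
    have hx : (Sum.inl ⟨2, by omega⟩ : consV r k) ∈ colE r k w p := by
      rw [← h, mem_baseEdge]; exact ⟨_, rfl⟩
    rcases mem_colE.1 hx with h' | ⟨j, h'⟩
    · rw [hw] at h'; simp at h'
    · exact Sum.inl_ne_inr h'.symm
  have hrow_ne_col : ∀ p q, rowE r k u p ≠ colE r k w q := by
    intro p q h
    exact hu_nin_col q (h ▸ Finset.mem_insert_self u _)
  -- membership decomposition for consEdges
  have hmem : ∀ e, e ∈ consEdges r k u w ↔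
      e = baseEdge r k ∨ (∃ p, e = rowE r k u p) ∨ (∃ p, e = colE r k w p) := by
    intro e
    rw [consEdges, Finset.mem_union, Finset.mem_union, Finset.mem_singleton,
      redEdges_eq, blueEdges_eq]
    simp only [Finset.mem_image, Finset.mem_univ, true_and, or_assoc]
    constructor
    · rintro (h | ⟨p, h⟩ | ⟨p, h⟩)
      · exact Or.inl h
      · exact Or.inr (Or.inl ⟨p, h.symm⟩)
      · exact Or.inr (Or.inr ⟨p, h.symm⟩)
    · rintro (h | ⟨p, h⟩ | ⟨p, h⟩)
      · exact Or.inl h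
      · exact Or.inr (Or.inl ⟨p, h.symm⟩)
      · exact Or.inr (Or.inr ⟨p, h.symm⟩)
  -- cardinality of the edge set
  have hdisj1 : Disjoint ({baseEdge r k} : Finset _) (redEdges r k u) := by
    rw [Finset.disjoint_left]
    intro e he he'
    rw [Finset.mem_singleton] at he
    rw [redEdges_eq] at he'
    simp only [Finset.mem_image, Finset.mem_univ, true_and] at he'
    rcases he' with ⟨p, hp⟩
    exact hbase_ne_row p (he.symm ▸ hp.symm)
  have hdisj2 : Disjoint ({baseEdge r k} : Finset _) (blueEdges r k w) := by
    rw [Finset.disjoint_left]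
    intro e he he'
    rw [Finset.mem_singleton] at he
    rw [blueEdges_eq] at he'
    simp only [Finset.mem_image, Finset.mem_univ, true_and] at he'
    rcases he' with ⟨p, hp⟩
    exact hbase_ne_col p (he.symm ▸ hp.symm)
  have hdisj3 : Disjoint (redEdges r k u) (blueEdges r k w) := by
    rw [Finset.disjoint_left]
    intro e he he'
    rw [redEdges_eq] at he
    rw [blueEdges_eq] at he'
    simp only [Finset.mem_image, Finset.mem_univ, true_and] at he he'
    rcases he with ⟨p, hp⟩
    rcases he' with ⟨q, hq⟩
    exact hrow_ne_col p q (hp.trans hq.symm)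
  have hcard_red : (redEdges r k u).card = k * (r - 1) := by
    rw [redEdges_eq, Finset.card_image_of_injective _ hrow_inj, Finset.card_univ]
    simp
  have hcard_blue : (blueEdges r k w).card = k * (r - 1) := by
    rw [blueEdges_eq, Finset.card_image_of_injective _ hcol_inj, Finset.card_univ]
    simp
  have hcardE : (consEdges r k u w).card = 1 + k * (r - 1) + k * (r - 1) := by
    rw [consEdges, Finset.card_union_of_disjoint, Finset.card_union_of_disjoint hdisj1,
      Finset.card_singleton, hcard_red, hcard_blue]
    rw [Finset.disjoint_union_left]
    exact ⟨hdisj2, hdisj3⟩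
  refine ⟨?_, ?_, ?_, ?_, ?_, ?_⟩
  -- vertex count
  · have e0 : n = (n - r) + r := by omega
    simp only [Fintype.card_sum, Fintype.card_prod, Fintype.card_fin]
    rw [e0, hnr]; ring
  -- uniformity
  · intro e he
    rcases (hmem e).1 he with h | ⟨p, h⟩ | ⟨p, h⟩
    · rw [h]; exact hcard_base
    · rw [h]; exact hcard_row p
    · rw [h]; exact hcard_col p
  -- linearity
  · intro e he f hf hef
    rw [Finset.card_le_one]
    intro a ha b hb
    rw [Finset.mem_inter] at ha hb
    rcases (hmem e).1 he with h | ⟨p, h⟩ | ⟨p, h⟩ <;> subst h <;>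
      rcases (hmem f).1 hf with h | ⟨q, h⟩ | ⟨q, h⟩ <;> subst h
    · exact absurd rfl hef
    · rw [hbase_row q a ha.1 ha.2, hbase_row q b hb.1 hb.2]
    · rw [hbase_col q a ha.1 ha.2, hbase_col q b hb.1 hb.2]
    · rw [hbase_row p a ha.2 ha.1, hbase_row p b hb.2 hb.1]
    · have hpq : p ≠ q := fun h => hef (by rw [h])
      rw [hrow_row p q a hpq ha.1 ha.2, hrow_row p q b hpq hb.1 hb.2]
    · rw [hrow_col p q a ha.1 ha.2, hrow_col p q b hb.1 hb.2]
    · rw [hbase_col p a ha.2 ha.1, hbase_col p b hb.2 hb.1]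
    · rw [hrow_col q p a ha.2 ha.1, hrow_col q p b hb.2 hb.1]
    · have hpq : p ≠ q := fun h => hef (by rw [h])
      rw [hcol_col p q a hpq ha.1 ha.2, hcol_col p q b hpq hb.1 hb.2]
  -- edge count
  · have e1 : 2 * (n - r) = (2 * (k * (r - 1))) * (r - 1) := by rw [hnr]; ring
    rw [hcardE, e1, Nat.mul_div_cancel _ hrpos]
    ring
  -- degree of u
  · have hfil : (consEdges r k u w).filter (fun e => u ∈ e) =
        {baseEdge r k} ∪ redEdges r k u := by
      rw [consEdges, Finset.filter_union, Finset.filter_union]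
      have h1 : ({baseEdge r k} : Finset _).filter (fun e => u ∈ e) = {baseEdge r k} := by
        rw [Finset.filter_singleton, if_pos]
        rw [hu, mem_baseEdge]; exact ⟨_, rfl⟩
      have h2 : (redEdges r k u).filter (fun e => u ∈ e) = redEdges r k u := by
        apply Finset.filter_true_of_mem
        intro e he
        rw [redEdges_eq] at he
        simp only [Finset.mem_image, Finset.mem_univ, true_and] at he
        rcases he with ⟨p, hp⟩
        rw [← hp]; exact Finset.mem_insert_self u _
      have h3 : (blueEdges r k w).filter (fun e => u ∈ e) = ∅ := by
        apply Finset.filter_false_of_mem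
        intro e he
        rw [blueEdges_eq] at he
        simp only [Finset.mem_image, Finset.mem_univ, true_and] at he
        rcases he with ⟨p, hp⟩
        rw [← hp]; exact hu_nin_col p
      rw [h1, h2, h3, Finset.union_empty]
    have e2 : n - 1 = (1 + k * (r - 1)) * (r - 1) := by
      have e3 : n - 1 = (n - r) + (r - 1) := by omega
      rw [e3, hnr]; ring
    rw [hdegree, hfil, Finset.card_union_of_disjoint hdisj1, Finset.card_singleton,
      hcard_red, e2, Nat.mul_div_cancel _ hrpos]
  -- degree of w
  · have hfil : (consEdges r k u w).filter (fun e => w ∈ e) =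
        {baseEdge r k} ∪ blueEdges r k w := by
      rw [consEdges, Finset.filter_union, Finset.filter_union]
      have h1 : ({baseEdge r k} : Finset _).filter (fun e => w ∈ e) = {baseEdge r k} := by
        rw [Finset.filter_singleton, if_pos]
        rw [hw, mem_baseEdge]; exact ⟨_, rfl⟩
      have h2 : (blueEdges r k w).filter (fun e => w ∈ e) = blueEdges r k w := by
        apply Finset.filter_true_of_mem
        intro e he
        rw [blueEdges_eq] at he
        simp only [Finset.mem_image, Finset.mem_univ, true_and] at he
        rcases he with ⟨p, hp⟩
        rw [← hp]; exact Finset.mem_insert_self w _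
      have h3 : (redEdges r k u).filter (fun e => w ∈ e) = ∅ := by
        apply Finset.filter_false_of_mem
        intro e he
        rw [redEdges_eq] at he
        simp only [Finset.mem_image, Finset.mem_univ, true_and] at he
        rcases he with ⟨p, hp⟩
        rw [← hp]; exact hw_nin_row p
      rw [h1, h2, h3, Finset.union_empty]
    have e2 : n - 1 = (1 + k * (r - 1)) * (r - 1) := by
      have e3 : n - 1 = (n - r) + (r - 1) := by omega
      rw [e3, hnr]; ring
    rw [hdegree, hfil, Finset.card_union_of_disjoint hdisj2, Finset.card_singleton,
      hcard_blue, e2, Nat.mul_div_cancel _ hrpos]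
end
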